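/- Let (M, d) be a metric space, π ∈ M, P : M → M with d(P μ, π) ≤ d(μ, π) for all μ and d(P^n(μ₀), π) → 0 for a fixed μ₀. Let σ : ℕ → ℕ satisfy σ(k) ≤ k and k − σ(k) < b for all k (bounded delay), and define μ_{k+1} = P(μ_{σ(k)}) with the given μ_0. Then d(μ_k, π) → 0. -/
import Mathlib


open Filter Topology

/-- The number of applications of `P` accumulated along the delayed iteration. -/
def delayIdx (σ : ℕ → ℕ) (hσ : ∀ k, σ k ≤ k) : ℕ → ℕ
  | 0 => 0
  | (k+1) => delayIdx σ hσ (σ k) + 1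
  decreasing_by exact Nat.lt_succ_of_le (hσ k)

theorem stmt11 {M : Type*} [MetricSpace M] (π μ₀ : M) (P : M → M)
    (hP : ∀ μ, dist (P μ) π ≤ dist μ π)
    (hconv : Tendsto (fun n => dist (P^[n] μ₀) π) atTop (nhds 0))
    (b : ℕ) (hb : 1 ≤ b) (σ : ℕ → ℕ)
    (hσ1 : ∀ k, σ k ≤ k) (hσ2 : ∀ k, k - σ k < b)
    (μ : ℕ → M) (hμ0 : μ 0 = μ₀) (hμ : ∀ k, μ (k + 1) = P (μ (σ k))) :
    Tendsto (fun k => dist (μ k) π) atTop (nhds 0) := by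
  set n : ℕ → ℕ := delayIdx σ hσ1 with hn
  have hstep : ∀ k, n (k+1) = n (σ k) + 1 := fun k => by rw [hn]; rw [delayIdx]
  -- μ k = P^[n k] μ₀
  have hrep : ∀ k, μ k = P^[n k] μ₀ := by
    intro k
    induction k using Nat.strong_induction_on with
    | _ k ih =>
      match k with
      | 0 => simpa [hn, delayIdx] using hμ0
      | (k+1) =>
        rw [hμ k, ih (σ k) (Nat.lt_succ_of_le (hσ1 k))]
        rw [hstep k, Function.iterate_succ_apply']
  -- n k ≥ k / b
  have hlow : ∀ k, k / b ≤ n k := by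
    intro k
    induction k using Nat.strong_induction_on with
    | _ k ih =>
      match k with
      | 0 => simp
      | (k+1) =>
        have h1 : (k+1) / b ≤ σ k / b + 1 := by
          have h4 := hσ2 k
          have h5 := hσ1 k
          have : k + 1 ≤ σ k + b := by omega
          calc (k+1)/b ≤ (σ k + b)/b := Nat.div_le_div_right this
            _ = σ k / b + 1 := by
                rw [Nat.add_div_right _ (by omega)]
        have h2 : σ k / b ≤ n (σ k) := ih (σ k) (Nat.lt_succ_of_le (hσ1 k))
        rw [hstep k]
        omega
  -- monotonicity of dist (P^[m] μ₀) π in m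
  have hmono : ∀ N m, N ≤ m → dist (P^[m] μ₀) π ≤ dist (P^[N] μ₀) π := by
    intro N m hNm
    obtain ⟨j, rfl⟩ := Nat.exists_eq_add_of_le hNm
    clear hNm
    induction j with
    | zero => simp
    | succ j ihj =>
      rw [show N + (j+1) = (N + j) + 1 by ring, Function.iterate_succ_apply']
      exact le_trans (hP _) ihj
  rw [Metric.tendsto_atTop] at hconv ⊢
  intro ε hε
  obtain ⟨N, hN⟩ := hconv ε hε
  refine ⟨b * N, fun k hk => ?_⟩
  have hNnk : N ≤ n k := le_trans (Nat.le_div_iff_mul_le (by omega) |>.2 (Nat.mul_comm N b ▸ hk)) (hlow k)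
  have := hN N le_rfl
  have h3 := hmono N (n k) hNnk
  rw [hrep k]
  rw [Real.dist_eq] at this ⊢
  have d1 : (0:ℝ) ≤ dist (P^[n k] μ₀) π := dist_nonneg
  have d2 : (0:ℝ) ≤ dist (P^[N] μ₀) π := dist_nonneg
  rw [abs_of_nonneg (by simpa using d1)]
  rw [abs_of_nonneg (by simpa using d2)] at this
  simpa using lt_of_le_of_lt h3 (by simpa using this)
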